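/- arXiv:2504.15706 — 2 statements merged into one kernel-verified Lean document; each statement's English description precedes it below -/
import Mathlib

section
/- Let G be a connected d-regular finite simple graph on V vertices and let n ≥ 1. The OR power G^n is D-regular with D = d·(V^n − 1)/(V − 1); let A be its adjacency matrix, λ_2 the second largest eigenvalue of A (counted with multiplicity), λ_min the smallest eigenvalue of A, and Λ = max(λ_2, |λ_min|). Then for every nonempty subset Y of the vertex set of G^n, the expansion satisfies |N(Y)| / |Y| ≥ D^2 / ( Λ^2 + (D^2 − Λ^2)·|Y| / V^n ), where N(Y) is the set of vertices of G^n that have at least one neighbor in Y. -/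
open SimpleGraph Finset
open scoped Classical

/-- The `n`-fold OR power of a simple graph `G`: vertices are `n`-tuples of vertices of `G`,
and two distinct tuples are adjacent iff at the first coordinate where they differ the
corresponding entries are adjacent in `G` (equivalently, the recursive OR-product
construction `G^1 = G`, `G^n = G OR-product G^(n-1)`). -/
def orPow {α : Type*} (G : SimpleGraph α) (n : ℕ) : SimpleGraph (Fin n → α) where
  Adj x y := ∃ j : Fin n, G.Adj (x j) (y j) ∧ ∀ i : Fin n, i < j → x i = y i
  symm := by
    constructor
    rintro x y ⟨j, hadj, hagree⟩
    exact ⟨j, hadj.symm, fun i hi => (hagree i hi).symm⟩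
  loopless := by
    constructor
    rintro x ⟨j, hadj, -⟩
    exact G.loopless.irrefl _ hadj

/-- The list of eigenvalues (with multiplicity, i.e. the roots of the characteristic
polynomial) of a real matrix, sorted in increasing order. -/
noncomputable def sortedEigs {ι : Type*} [Fintype ι] [DecidableEq ι]
    (A : Matrix ι ι ℝ) : List ℝ :=
  A.charpoly.roots.sort (· ≤ ·)

/-- The smallest eigenvalue (first entry of the increasingly sorted list of eigenvalues). -/
noncomputable def lambdaMin {ι : Type*} [Fintype ι] [DecidableEq ι]
    (A : Matrix ι ι ℝ) : ℝ :=
  (sortedEigs A).getD 0 0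

/-- The largest eigenvalue (last entry of the increasingly sorted list of eigenvalues). -/
noncomputable def lambdaMax {ι : Type*} [Fintype ι] [DecidableEq ι]
    (A : Matrix ι ι ℝ) : ℝ :=
  (sortedEigs A).getD (Fintype.card ι - 1) 0

/-- The second largest eigenvalue, counted with multiplicity. -/
noncomputable def lambdaSecond {ι : Type*} [Fintype ι] [DecidableEq ι]
    (A : Matrix ι ι ℝ) : ℝ :=
  (sortedEigs A).getD (Fintype.card ι - 2) 0


set_option linter.unusedSectionVars false
set_option maxHeartbeats 1000000
open Matrix Polynomial

section AuxSorted

lemma sorted_getD_le {L : List ℝ} (h : L.Pairwise (· ≤ ·)) {i j : ℕ} (hij : i ≤ j)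
    (hj : j < L.length) : L[i]'(lt_of_le_of_lt hij hj) ≤ L[j] := by
  rcases eq_or_lt_of_le hij with rfl | h'
  · exact le_rfl
  · exact List.Pairwise.rel_get_of_lt h (by simpa using h')

lemma sort_min {s : Multiset ℝ} {x : ℝ} (hx : x ∈ s) :
    (s.sort (· ≤ ·)).getD 0 0 ≤ x := by
  have hs := Multiset.pairwise_sort s (· ≤ ·)
  have hmem : x ∈ s.sort (· ≤ ·) := (Multiset.mem_sort _).2 hx
  obtain ⟨i, hi, rfl⟩ := List.getElem_of_mem hmem
  rw [List.getD_eq_getElem _ _ (Nat.pos_of_ne_zero (by omega))]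
  exact sorted_getD_le hs (Nat.zero_le i) hi

lemma sort_max {s : Multiset ℝ} {x : ℝ} (hx : x ∈ s) :
    x ≤ (s.sort (· ≤ ·)).getD (Multiset.card s - 1) 0 := by
  have hs := Multiset.pairwise_sort s (· ≤ ·)
  have hlen : (s.sort (· ≤ ·)).length = Multiset.card s := Multiset.length_sort _
  have hmem : x ∈ s.sort (· ≤ ·) := (Multiset.mem_sort _).2 hx
  obtain ⟨i, hi, rfl⟩ := List.getElem_of_mem hmem
  rw [List.getD_eq_getElem _ _ (by omega)]
  exact sorted_getD_le hs (by omega) (by omega)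

/-- If `x < y` are both members of `s`, then `x` is at most the second largest entry. -/
lemma sort_second {s : Multiset ℝ} {x y : ℝ} (hx : x ∈ s) (hy : y ∈ s) (hxy : x < y) :
    x ≤ (s.sort (· ≤ ·)).getD (Multiset.card s - 2) 0 := by
  have hs := Multiset.pairwise_sort s (· ≤ ·)
  have hlen : (s.sort (· ≤ ·)).length = Multiset.card s := Multiset.length_sort _
  have hmemx : x ∈ s.sort (· ≤ ·) := (Multiset.mem_sort _).2 hx
  have hmemy : y ∈ s.sort (· ≤ ·) := (Multiset.mem_sort _).2 hy
  obtain ⟨i, hi, rfl⟩ := List.getElem_of_mem hmemx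
  obtain ⟨j, hj, rfl⟩ := List.getElem_of_mem hmemy
  have hij : i ≠ j := fun h => by subst h; exact lt_irrefl _ hxy
  have hN : 2 ≤ Multiset.card s := by omega
  rw [List.getD_eq_getElem _ _ (by omega)]
  rcases le_or_gt i (Multiset.card s - 2) with h | h
  · exact sorted_getD_le hs h (by omega)
  · -- i = card - 1, so x is the maximum, contradicting x < y
    have hiv : i = Multiset.card s - 1 := by omega
    have : (s.sort (· ≤ ·))[j] ≤ (s.sort (· ≤ ·))[i] := sorted_getD_le hs (by omega) (by omega)
    linarith

end AuxSorted

section AuxCharpoly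
variable {ι : Type*} [Fintype ι] [DecidableEq ι]



lemma charpoly_unitary_conj (u B : Matrix ι ι ℝ) (h1 : u * star u = 1) (h2 : star u * u = 1) :
    (u * B * star u).charpoly = B.charpoly := by
  unfold Matrix.charpoly
  have key : charmatrix (u * B * star u) =
      u.map C * charmatrix B * (star u).map C := by
    unfold charmatrix
    have hmap : ((u * B * star u)).map (C : ℝ →+* ℝ[X]) = u.map C * B.map C * (star u).map C := by
      rw [Matrix.map_mul, Matrix.map_mul]
    rw [RingHom.mapMatrix_apply, hmap]
    have hscalar : (Matrix.diagonal (fun _ : ι => (X : ℝ[X]))) =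
        u.map C * (Matrix.diagonal (fun _ : ι => (X : ℝ[X]))) * (star u).map C := by
      rw [← Matrix.smul_one_eq_diagonal, mul_smul_comm, smul_mul_assoc, mul_one,
        ← Matrix.map_mul, h1]
      simp
    rw [Matrix.mul_sub, Matrix.sub_mul, Matrix.scalar_apply]
    rw [← hscalar]
    rfl
  rw [key, det_mul, det_mul, mul_comm, ← mul_assoc, ← det_mul, ← Matrix.map_mul, h2]
  simp [charmatrix]

lemma charpoly_diagonal (μ : ι → ℝ) :
    (Matrix.diagonal μ).charpoly = ∏ i, (X - C (μ i)) := by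
  unfold Matrix.charpoly
  have : charmatrix (Matrix.diagonal μ) = Matrix.diagonal (fun i => X - C (μ i)) := by
    ext i j
    by_cases h : i = j
    · subst h; simp [charmatrix_apply_eq]
    · simp [charmatrix_apply_ne _ _ _ h, Matrix.diagonal_apply_ne _ h]
  rw [this, det_diagonal]

lemma charpoly_roots_eq_eigenvalues {A : Matrix ι ι ℝ} (hA : A.IsHermitian) :
    A.charpoly.roots = Finset.univ.val.map hA.eigenvalues := by
  have hspec := hA.spectral_theorem
  have hu := (Matrix.mem_unitaryGroup_iff).mp (hA.eigenvectorUnitary).2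
  have hu2 := (Matrix.mem_unitaryGroup_iff').mp (hA.eigenvectorUnitary).2
  have hch : A.charpoly = (Matrix.diagonal hA.eigenvalues).charpoly := by
    conv_lhs => rw [hspec]
    have : (RCLike.ofReal ∘ hA.eigenvalues : ι → ℝ) = hA.eigenvalues := rfl
    rw [this]
    exact charpoly_unitary_conj _ _ hu hu2
  rw [hch, _root_.charpoly_diagonal]
  have : ∏ i, (X - C (hA.eigenvalues i)) =
      ((Finset.univ.val.map hA.eigenvalues).map fun a => X - C a).prod := by
    rw [Multiset.map_map]
    rfl
  rw [this, roots_multiset_prod_X_sub_C]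

end AuxCharpoly

section AuxPerron
variable {ι : Type*} [Fintype ι]



/-- All eigenvalues of a `D`-regular graph are bounded by `D` in absolute value. -/
lemma eig_abs_le_degree (H : SimpleGraph ι) [DecidableRel H.Adj] {D : ℕ}
    (hreg : H.IsRegularOfDegree D) {μ : ℝ} {f : ι → ℝ} (hf : f ≠ 0)
    (heig : H.adjMatrix ℝ *ᵥ f = μ • f) : |μ| ≤ D := by
  have hne : Nonempty ι := by
    by_contra h
    exact hf (funext fun v => absurd (Nonempty.intro v) h)
  obtain ⟨v, -, hv⟩ := Finset.exists_max_image Finset.univ (fun v => |f v|) univ_nonempty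
  have hfv : 0 < |f v| := by
    rcases lt_or_eq_of_le (abs_nonneg (f v)) with h | h
    · exact h
    · exfalso; apply hf; funext u
      have := hv u (mem_univ u)
      rw [← h] at this
      exact abs_nonneg (f u) |>.antisymm' this |> abs_eq_zero.mp
  have h1 : |μ| * |f v| = |(H.adjMatrix ℝ *ᵥ f) v| := by
    rw [heig]; simp [abs_mul]
  have h2 : |(H.adjMatrix ℝ *ᵥ f) v| ≤ D * |f v| := by
    rw [adjMatrix_mulVec_apply]
    calc |∑ u ∈ H.neighborFinset v, f u| ≤ ∑ u ∈ H.neighborFinset v, |f u| :=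
          Finset.abs_sum_le_sum_abs _ _
    _ ≤ ∑ u ∈ H.neighborFinset v, |f v| := Finset.sum_le_sum fun u _ => hv u (mem_univ u)
    _ = D * |f v| := by
          rw [Finset.sum_const, show (H.neighborFinset v).card = D from hreg v, nsmul_eq_mul]
  have := h1.trans_le h2
  exact le_of_mul_le_mul_right this hfv

/-- In a connected `D`-regular graph, any eigenvector for eigenvalue `D` is constant. -/
lemma eigvec_top_constant (H : SimpleGraph ι) [DecidableRel H.Adj] {D : ℕ}
    (hreg : H.IsRegularOfDegree D) (hconn : H.Connected) {f : ι → ℝ}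
    (heig : H.adjMatrix ℝ *ᵥ f = (D : ℝ) • f) : ∀ v w, f v = f w := by
  have hne : Nonempty ι := hconn.nonempty
  obtain ⟨v, -, hv⟩ := Finset.exists_max_image Finset.univ f univ_nonempty
  -- every neighbor of a maximizer attains the max
  have key : ∀ u, f u = f v → ∀ w, H.Adj u w → f w = f v := by
    intro u hu w hw
    have h1 : (H.adjMatrix ℝ *ᵥ f) u = D * f u := by rw [heig]; simp
    rw [adjMatrix_mulVec_apply] at h1
    have hcard : (H.neighborFinset u).card = D := hreg u
    have hsum : ∑ x ∈ H.neighborFinset u, (f v - f x) = 0 := by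
      rw [Finset.sum_sub_distrib, Finset.sum_const, hcard, h1, hu]
      ring
    have hzero : ∀ x ∈ H.neighborFinset u, f v - f x = 0 :=
      (Finset.sum_eq_zero_iff_of_nonneg (fun x _ => by
        have := hv x (mem_univ x); linarith)).mp hsum
    have := hzero w (by simpa [SimpleGraph.mem_neighborFinset] using hw)
    linarith
  intro a b
  suffices h : ∀ c, f c = f v by rw [h a, h b]
  intro c
  have walk_lemma : ∀ (a b : ι) (w : H.Walk a b), f a = f v → f b = f v := by
    intro a b w
    induction w with
    | nil => exact id
    | @cons x y z hadj _ ih => exact fun hx => ih (key x hx y hadj)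
  obtain ⟨w⟩ := hconn v c
  exact walk_lemma v c w rfl

end AuxPerron

section AuxOrPow
variable {α : Type*} [Fintype α] (G : SimpleGraph α)



lemma orPow_neighborFinset_eq (n : ℕ) (x : Fin n → α) :
    (orPow G n).neighborFinset x = Finset.univ.biUnion (fun j : Fin n =>
      Fintype.piFinset (fun i : Fin n =>
        if i < j then {x i} else if i = j then G.neighborFinset (x j) else Finset.univ)) := by
  ext y
  simp only [mem_neighborFinset, Finset.mem_biUnion, Finset.mem_univ, true_and,
    Fintype.mem_piFinset]
  constructor
  · rintro ⟨j, hadj, hlt⟩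
    refine ⟨j, fun i => ?_⟩
    by_cases h1 : i < j
    · simp [h1, (hlt i h1).symm]
    · by_cases h2 : i = j
      · subst h2; simp only [h1, if_false, eq_self_iff_true, if_true, mem_neighborFinset]; exact hadj
      · simp [h1, h2]
  · rintro ⟨j, hj⟩
    refine ⟨j, ?_, fun i hi => ?_⟩
    · have := hj j
      simp [lt_irrefl, mem_neighborFinset] at this
      exact this
    · have := hj i
      simp [hi, Finset.mem_singleton] at this
      exact this.symm

lemma orPow_degree (n : ℕ) {d V : ℕ} (hcard : Fintype.card α = V)
    (hreg : G.IsRegularOfDegree d) (x : Fin n → α) :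
    (orPow G n).degree x = d * ∑ k ∈ Finset.range n, V ^ k := by
  rw [SimpleGraph.degree, orPow_neighborFinset_eq, Finset.card_biUnion]
  · have hterm : ∀ j : Fin n, (Fintype.piFinset (fun i : Fin n =>
        if i < j then ({x i} : Finset α) else if i = j then G.neighborFinset (x j)
        else Finset.univ)).card = d * V ^ (n - 1 - (j : ℕ)) := by
      intro j
      rw [Fintype.card_piFinset]
      have : ∀ i : Fin n, (if i < j then ({x i} : Finset α) else if i = j then
          G.neighborFinset (x j) else Finset.univ).card =
          if i < j then 1 else if i = j then d else V := by
        intro i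
        by_cases h1 : i < j
        · simp [h1]
        · by_cases h2 : i = j
          · subst h2; simp [h1, hreg (x i)]
          · simp [h1, h2, ← hcard, Finset.card_univ]
      rw [Finset.prod_congr rfl (fun i _ => this i)]
      rw [Finset.prod_ite, Finset.prod_const, Finset.prod_ite, Finset.prod_const,
        Finset.prod_const, one_pow, one_mul]
      have hd : (Finset.filter (fun i => i = j) (Finset.filter (fun i : Fin n => ¬ i < j)
          Finset.univ)).card = 1 := by
        rw [show (Finset.filter (fun i => i = j) (Finset.filter (fun i : Fin n => ¬ i < j)
          Finset.univ)) = {j} by ext i; simp +contextual [Finset.mem_singleton, le_refl]]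
        simp
      have hV : (Finset.filter (fun i => ¬ i = j) (Finset.filter (fun i : Fin n => ¬ i < j)
          Finset.univ)).card = n - 1 - (j : ℕ) := by
        rw [show (Finset.filter (fun i => ¬ i = j) (Finset.filter (fun i : Fin n => ¬ i < j)
          Finset.univ)) = Finset.Ioi j by
            ext i
            simp only [Finset.mem_filter, Finset.mem_univ, true_and, Finset.mem_Ioi,
              Fin.lt_def, Fin.ext_iff]
            omega]
        exact Fin.card_Ioi j
      rw [hd, hV, pow_one]
    rw [Finset.sum_congr rfl (fun j _ => hterm j)]
    rw [← Finset.mul_sum]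
    congr 1
    rw [← Fin.sum_univ_eq_sum_range (fun k => V ^ k) n]
    apply Finset.sum_nbij' (fun j => j.rev) (fun j => j.rev)
    · intro j _; exact Finset.mem_univ _
    · intro j _; exact Finset.mem_univ _
    · intro j _; exact Fin.rev_rev j
    · intro j _; exact Fin.rev_rev j
    · intro j _
      congr 1
      simp [Fin.rev]
      omega
  · -- disjointness
    intro j₁ _ j₂ _ hne
    simp only [Finset.disjoint_left]
    intro y h1 h2
    rcases lt_or_gt_of_ne hne with h | h
    · have a1 := Fintype.mem_piFinset.mp h1 j₁
      have a2 := Fintype.mem_piFinset.mp h2 j₁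
      simp [lt_irrefl, mem_neighborFinset] at a1
      simp [h, Finset.mem_singleton] at a2
      rw [← a2] at a1
      exact G.loopless.irrefl _ a1.symm
    · have a1 := Fintype.mem_piFinset.mp h1 j₂
      have a2 := Fintype.mem_piFinset.mp h2 j₂
      simp [lt_irrefl, mem_neighborFinset] at a2
      simp [h, Finset.mem_singleton] at a1
      rw [← a1] at a2
      exact G.loopless.irrefl _ a2.symm

lemma orPow_adj_update {n : ℕ} {x : Fin n → α} {j : Fin n} {b : α} (h : G.Adj (x j) b) :
    (orPow G n).Adj x (Function.update x j b) := by
  refine ⟨j, ?_, fun i hi => ?_⟩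
  · rw [Function.update_self]; exact h
  · rw [Function.update_of_ne (ne_of_lt hi)]

lemma orPow_reachable_update {n : ℕ} (x : Fin n → α) (j : Fin n) (b : α)
    (h : G.Reachable (x j) b) : (orPow G n).Reachable x (Function.update x j b) := by
  obtain ⟨w⟩ := h
  -- induct over the walk, generalizing x
  suffices H : ∀ (a c : α) (w : G.Walk a c) (x : Fin n → α), x j = a →
      (orPow G n).Reachable x (Function.update x j c) by
    exact H _ _ w x rfl
  intro a c w
  induction w with
  | nil =>
    intro x hx
    rw [← hx, Function.update_eq_self]
  | @cons p q r hadj w' ih =>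
    intro x hx
    have h1 : (orPow G n).Adj x (Function.update x j q) :=
      orPow_adj_update G (by rw [hx]; exact hadj)
    have h2 := ih (Function.update x j q) (Function.update_self j q x)
    rw [Function.update_idem] at h2
    exact (SimpleGraph.Adj.reachable h1).trans h2

lemma orPow_connected {n : ℕ} (hconn : G.Connected) : (orPow G n).Connected := by
  have hne : Nonempty α := hconn.nonempty
  have key : ∀ (k : ℕ) (x y : Fin n → α),
      (Finset.univ.filter fun i => x i ≠ y i).card ≤ k → (orPow G n).Reachable x y := by
    intro k
    induction k with
    | zero =>
      intro x y h
      have : x = y := by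
        funext i
        by_contra hne'
        have : i ∈ Finset.univ.filter fun i => x i ≠ y i := by simp [hne']
        have := Finset.card_pos.mpr ⟨i, this⟩
        omega
      rw [this]
    | succ m ih =>
      intro x y h
      by_cases hxy : x = y
      · rw [hxy]
      · have : ∃ j, x j ≠ y j := by
          by_contra hc
          push_neg at hc
          exact hxy (funext hc)
        obtain ⟨j, hj⟩ := this
        have h1 : (orPow G n).Reachable x (Function.update x j (y j)) :=
          orPow_reachable_update G x j (y j) (hconn (x j) (y j))
        have h2 : (orPow G n).Reachable (Function.update x j (y j)) y := by
          apply ih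
          have hsub : (Finset.univ.filter fun i => Function.update x j (y j) i ≠ y i) ⊆
              (Finset.univ.filter fun i => x i ≠ y i).erase j := by
            intro i hi
            simp only [Finset.mem_filter, Finset.mem_univ, true_and] at hi
            rcases eq_or_ne i j with rfl | hij
            · rw [Function.update_self] at hi; exact absurd rfl hi
            · rw [Function.update_of_ne hij] at hi
              exact Finset.mem_erase.mpr ⟨hij, by simp [hi]⟩
          calc (Finset.univ.filter fun i => Function.update x j (y j) i ≠ y i).card
              ≤ ((Finset.univ.filter fun i => x i ≠ y i).erase j).card :=
                Finset.card_le_card hsub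
            _ = (Finset.univ.filter fun i => x i ≠ y i).card - 1 :=
                Finset.card_erase_of_mem (by simp [hj])
            _ ≤ m := by omega
        exact h1.trans h2
  exact ⟨fun x y => key _ x y le_rfl⟩

lemma geom_nat (V : ℕ) (hV : 1 ≤ V) (n : ℕ) :
    (V - 1) * ∑ k ∈ Finset.range n, V ^ k = V ^ n - 1 := by
  induction n with
  | zero => simp
  | succ m ih =>
    rw [Finset.sum_range_succ, Nat.mul_add, ih, Nat.sub_mul, one_mul, pow_succ]
    have h1 : 1 ≤ V ^ m := Nat.one_le_pow _ _ hV
    have h2 : V ^ m ≤ V * V ^ m := Nat.le_mul_of_pos_left _ hV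
    have h3 : V * V ^ m = V ^ m * V := Nat.mul_comm _ _
    omega

lemma Dnat_eq (d V n : ℕ) (hV : 2 ≤ V) :
    d * (V ^ n - 1) / (V - 1) = d * ∑ k ∈ Finset.range n, V ^ k := by
  rw [← geom_nat V (by omega) n, ← mul_assoc, mul_comm d (V-1), mul_assoc,
    Nat.mul_div_cancel_left _ (by omega : 0 < V - 1)]

lemma Dreal_eq (d V n : ℕ) (hV : 2 ≤ V) :
    (d : ℝ) * ((V : ℝ) ^ n - 1) / ((V : ℝ) - 1) =
      ((d * ∑ k ∈ Finset.range n, V ^ k : ℕ) : ℝ) := by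
  have h1 : 1 ≤ V ^ n := Nat.one_le_pow _ _ (by omega)
  have h2 : ((V : ℝ)) ^ n - 1 = ((V ^ n - 1 : ℕ) : ℝ) := by push_cast [h1]; ring
  have h3 : ((V ^ n - 1 : ℕ) : ℝ) = ((V : ℝ) - 1) * ((∑ k ∈ Finset.range n, V ^ k : ℕ) : ℝ) := by
    rw [← geom_nat V (by omega) n]
    push_cast [show 1 ≤ V by omega]
    ring
  rw [h2, h3]
  have hne : (V : ℝ) - 1 ≠ 0 := by
    have : (2 : ℝ) ≤ (V : ℝ) := by exact_mod_cast hV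
    linarith
  rw [mul_comm ((V : ℝ) - 1) _, ← mul_assoc, mul_div_assoc, div_self hne, mul_one]
  push_cast
  ring

end AuxOrPow

section AuxTanner
variable {ι : Type*} [Fintype ι] [DecidableEq ι]

lemma tanner (H : SimpleGraph ι) [DecidableRel H.Adj] {D : ℕ}
    (hreg : H.IsRegularOfDegree D) (hconn : H.Connected) (hD : 0 < D)
    (Y : Finset ι) (hY : Y.Nonempty) :
    (D : ℝ) ^ 2 / ((max (lambdaSecond (H.adjMatrix ℝ)) |lambdaMin (H.adjMatrix ℝ)|) ^ 2 +
        ((D : ℝ) ^ 2 - (max (lambdaSecond (H.adjMatrix ℝ)) |lambdaMin (H.adjMatrix ℝ)|) ^ 2)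
          * (Y.card : ℝ) / (Fintype.card ι : ℝ)) ≤
      ((Finset.univ.filter fun v => ∃ y ∈ Y, H.Adj v y).card : ℝ) / (Y.card : ℝ) := by
  have hne : Nonempty ι := hconn.nonempty
  set A := H.adjMatrix ℝ with hAdef
  have hA : A.IsHermitian := by
    rw [Matrix.IsHermitian, conjTranspose_eq_transpose_of_trivial, hAdef, transpose_adjMatrix]
  set Λ := max (lambdaSecond A) |lambdaMin A| with hΛdef
  set N := Fintype.card ι with hNdef
  have hN : 0 < N := Fintype.card_pos
  set μ := hA.eigenvalues with hμdef
  set e := hA.eigenvectorBasis with hedef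
  -- inner products are dot products
  have hinner : ∀ x y : EuclideanSpace ℝ ι, (inner ℝ x y : ℝ) = ∑ v, x v * y v := by
    intro x y
    rw [PiLp.inner_apply]
    simp [RCLike.inner_apply, mul_comm]
  have hsym : ∀ x y : ι → ℝ, x ⬝ᵥ (A *ᵥ y) = (A *ᵥ x) ⬝ᵥ y := by
    intro x y
    rw [hAdef, SimpleGraph.dotProduct_mulVec_adjMatrix]
    rw [show (H.adjMatrix ℝ *ᵥ x) ⬝ᵥ y = y ⬝ᵥ (H.adjMatrix ℝ *ᵥ x) from dotProduct_comm _ _,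
      SimpleGraph.dotProduct_mulVec_adjMatrix]
    rw [Finset.sum_comm]
    apply Finset.sum_congr rfl; intro i _
    apply Finset.sum_congr rfl; intro j _
    by_cases h : H.Adj i j
    · rw [if_pos h, if_pos h.symm, mul_comm]
    · rw [if_neg h, if_neg (fun hc => h hc.symm)]
  -- generic coordinates of A *ᵥ x
  have hcoord : ∀ (x : ι → ℝ) (j : ι),
      (inner ℝ (e j) (WithLp.toLp 2 (A *ᵥ x)) : ℝ) = μ j * (inner ℝ (e j) (WithLp.toLp 2 x) : ℝ) := by
    intro x j
    rw [hinner, hinner]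
    have h1 : ∑ v, e j v * (WithLp.toLp 2 (A *ᵥ x)) v = (⇑(e j)) ⬝ᵥ (A *ᵥ x) := rfl
    rw [h1, hsym, hA.mulVec_eigenvectorBasis, smul_dotProduct]
    rfl
  -- Parseval
  have hpars : ∀ x : EuclideanSpace ℝ ι,
      ∑ j, (inner ℝ (e j) x : ℝ) ^ 2 = (inner ℝ x x : ℝ) := by
    intro x
    rw [← OrthonormalBasis.sum_inner_mul_inner e x x]
    apply Finset.sum_congr rfl
    intro j _
    rw [real_inner_comm x (e j), sq]
  -- the indicator vector of Y
  set f : ι → ℝ := (fun v => if v ∈ Y then (1 : ℝ) else 0) with hfdef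
  set c : ι → ℝ := fun j => (inner ℝ (e j) (WithLp.toLp 2 f) : ℝ) with hcdef
  have hff : (@inner ℝ (EuclideanSpace ℝ ι) _ (WithLp.toLp 2 f) (WithLp.toLp 2 f)) = (Y.card : ℝ) := by
    rw [hinner]
    rw [Finset.sum_congr rfl (fun v _ => show (WithLp.toLp 2 f) v * (WithLp.toLp 2 f) v = if v ∈ Y then 1 else 0 by
      by_cases h : v ∈ Y <;> simp [hfdef, h])]
    rw [Finset.sum_ite_mem, Finset.univ_inter, Finset.sum_const, nsmul_eq_mul, mul_one]
  have hsum_c : ∑ j, c j ^ 2 = (Y.card : ℝ) := by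
    have := hpars (WithLp.toLp 2 f)
    rw [hff] at this
    rw [← this]
  -- constant vector
  set g : ι → ℝ := (fun _ => (1 : ℝ)) with hgdef
  have hAg : A *ᵥ g = (D : ℝ) • g := by
    funext v
    rw [hAdef, SimpleGraph.adjMatrix_mulVec_apply]
    show ∑ _u ∈ H.neighborFinset v, (1 : ℝ) = (D : ℝ) * 1
    rw [Finset.sum_const, show (H.neighborFinset v).card = D from hreg v, nsmul_eq_mul]
  have hgg : (@inner ℝ (EuclideanSpace ℝ ι) _ (WithLp.toLp 2 g) (WithLp.toLp 2 g)) = (N : ℝ) := by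
    rw [hinner]
    simp [hgdef, hNdef]
  -- existence of the top eigenvector index
  have hexist : ∃ j₀, μ j₀ = D ∧ (inner ℝ (e j₀) (WithLp.toLp 2 g) : ℝ) ≠ 0 := by
    by_contra hcon
    push_neg at hcon
    have hzero : ∀ j, (inner ℝ (e j) (WithLp.toLp 2 g) : ℝ) = 0 := by
      intro j
      by_cases hj : μ j = (D : ℝ)
      · exact hcon j hj
      · have h1 := hcoord g j
        rw [hAg] at h1
        have h2 : (inner ℝ (e j) (WithLp.toLp 2 ((D : ℝ) • g))) = (D : ℝ) * (inner ℝ (e j) (WithLp.toLp 2 g) : ℝ) := by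
          rw [hinner, hinner, Finset.mul_sum]
          apply Finset.sum_congr rfl
          intro v _
          show e j v * ((D : ℝ) • g) v = (D : ℝ) * (e j v * g v)
          rw [Pi.smul_apply, smul_eq_mul]
          ring
        rw [h2] at h1
        have : (μ j - (D : ℝ)) * (inner ℝ (e j) (WithLp.toLp 2 g) : ℝ) = 0 := by linarith
        rcases mul_eq_zero.mp this with h | h
        · exact absurd (by linarith) hj
        · exact h
    have := hpars (WithLp.toLp 2 g)
    rw [hgg] at this
    have h0 : ∑ j : ι, (inner ℝ (e j) (WithLp.toLp 2 g) : ℝ) ^ 2 = 0 :=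
      Finset.sum_eq_zero fun j _ => by rw [hzero j]; norm_num
    rw [h0] at this
    have hN' : (0 : ℝ) < (N : ℝ) := by exact_mod_cast hN
    linarith
  obtain ⟨j₀, hμj₀, hgj₀⟩ := hexist
  -- e j₀ is constant
  have hconst : ∀ v w, e j₀ v = e j₀ w := by
    have h := hA.mulVec_eigenvectorBasis j₀
    rw [show hA.eigenvalues j₀ = (D : ℝ) from hμj₀] at h
    exact eigvec_top_constant H hreg hconn h
  obtain ⟨v₀⟩ := hne
  set a : ℝ := e j₀ v₀ with hadef
  have hea : ∀ v, e j₀ v = a := fun v => hconst v v₀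
  have hej₀_self : (inner ℝ (e j₀) (e j₀) : ℝ) = 1 := by
    rw [real_inner_self_eq_norm_sq, e.orthonormal.1 j₀, one_pow]
  have ha2 : a ^ 2 * N = 1 := by
    rw [hinner] at hej₀_self
    rw [Finset.sum_congr rfl (fun v _ => by rw [hea v, ← sq])] at hej₀_self
    rw [Finset.sum_const, nsmul_eq_mul, mul_comm] at hej₀_self
    exact_mod_cast hej₀_self
  have haN : a ^ 2 = 1 / N := by
    field_simp
    linarith [ha2]
  have hc₀ : c j₀ = a * Y.card := by
    rw [hcdef]
    simp only
    rw [hinner]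
    rw [Finset.sum_congr rfl (fun v _ => by rw [hea v])]
    rw [← Finset.mul_sum]
    congr 1
    rw [Finset.sum_congr rfl (fun v _ => show (WithLp.toLp 2 f) v = if v ∈ Y then 1 else 0 from rfl)]
    rw [Finset.sum_ite_mem, Finset.univ_inter, Finset.sum_const, nsmul_eq_mul, mul_one]
  have hc₀sq : c j₀ ^ 2 = (Y.card : ℝ) ^ 2 / N := by
    rw [hc₀, mul_pow, haN]; ring
  -- uniqueness: other eigenvalues are < D
  have huniq : ∀ j, j ≠ j₀ → μ j ≠ (D : ℝ) := by
    intro j hj hμj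
    have hconstj : ∀ v w, e j v = e j w := by
      have h := hA.mulVec_eigenvectorBasis j
      rw [show hA.eigenvalues j = (D : ℝ) from hμj] at h
      exact eigvec_top_constant H hreg hconn h
    set b : ℝ := e j v₀ with hbdef
    have heb : ∀ v, e j v = b := fun v => hconstj v v₀
    have hej_self : (inner ℝ (e j) (e j) : ℝ) = 1 := by
      rw [real_inner_self_eq_norm_sq, e.orthonormal.1 j, one_pow]
    have hb2 : b ^ 2 * N = 1 := by
      rw [hinner] at hej_self
      rw [Finset.sum_congr rfl (fun v _ => by rw [heb v, ← sq])] at hej_self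
      rw [Finset.sum_const, nsmul_eq_mul, mul_comm] at hej_self
      exact_mod_cast hej_self
    have hb0 : b ≠ 0 := by
      intro h
      rw [h] at hb2
      norm_num at hb2
    have ha0 : a ≠ 0 := by
      intro h
      rw [h] at ha2
      norm_num at ha2
    have horth : (inner ℝ (e j) (e j₀) : ℝ) = 0 := by
      have := e.orthonormal.2 hj
      exact_mod_cast this
    rw [hinner] at horth
    have hsba : ∑ v, e j v * e j₀ v = ∑ _v : ι, b * a :=
      Finset.sum_congr rfl fun v _ => by rw [heb v, hea v]
    rw [hsba, Finset.sum_const, nsmul_eq_mul] at horth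
    have hN0 : (N : ℝ) ≠ 0 := Nat.cast_ne_zero.mpr hN.ne'
    exact (mul_ne_zero hN0 (mul_ne_zero hb0 ha0)) horth
  -- eigenvalue bounds
  have hroots : A.charpoly.roots = Finset.univ.val.map μ := charpoly_roots_eq_eigenvalues hA
  have hroots_card : Multiset.card A.charpoly.roots = N := by
    rw [hroots, Multiset.card_map]
    simp [hNdef]
  have hmem : ∀ j, μ j ∈ A.charpoly.roots := by
    intro j
    rw [hroots]
    exact Multiset.mem_map_of_mem _ (Finset.mem_univ j)
  have hmin_le : ∀ j, lambdaMin A ≤ μ j := fun j => sort_min (hmem j)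
  have hle_D : ∀ j, μ j ≤ (D : ℝ) := by
    intro j
    have hne0 : ⇑(e j) ≠ (0 : ι → ℝ) := by
      intro h
      have : (inner ℝ (e j) (e j) : ℝ) = 1 := by
        rw [real_inner_self_eq_norm_sq, e.orthonormal.1 j, one_pow]
      rw [hinner] at this
      have h0 : ∑ v, e j v * e j v = 0 := Finset.sum_eq_zero fun v _ => by
        rw [show e j v = 0 from congrFun h v]; norm_num
      rw [h0] at this
      norm_num at this
    have := eig_abs_le_degree H hreg hne0 (by rw [← hAdef]; exact hA.mulVec_eigenvectorBasis j)
    exact (abs_le.mp this).2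
  have hsecond : ∀ j, j ≠ j₀ → μ j ≤ lambdaSecond A := by
    intro j hj
    have h1 : μ j < (D : ℝ) := lt_of_le_of_ne (hle_D j) (huniq j hj)
    have h2 : (D : ℝ) ∈ A.charpoly.roots := by rw [← hμj₀]; exact hmem j₀
    have := sort_second (hmem j) h2 h1
    rw [hroots_card] at this
    exact this
  have hΛsq : ∀ j, j ≠ j₀ → μ j ^ 2 ≤ Λ ^ 2 := by
    intro j hj
    have h1 : μ j ≤ Λ := le_trans (hsecond j hj) (le_max_left _ _)
    have h2 : -Λ ≤ μ j := by
      have := hmin_le j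
      have h3 : -|lambdaMin A| ≤ lambdaMin A := neg_abs_le _
      have h4 : |lambdaMin A| ≤ Λ := le_max_right _ _
      linarith
    rw [← sq_abs (μ j), ← sq_abs Λ]
    apply pow_le_pow_left₀ (abs_nonneg _)
    rw [abs_le]
    constructor
    · have : |Λ| = Λ := abs_of_nonneg (le_trans (abs_nonneg _) (le_max_right _ _))
      rw [this]; exact h2
    · exact le_trans h1 (le_abs_self Λ)
  -- spectral bound on ‖Af‖²
  have hAf_norm : ∑ v, ((A *ᵥ f) v) ^ 2 = ∑ j, (μ j * c j) ^ 2 := by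
    have h1 := hpars (WithLp.toLp 2 (A *ᵥ f))
    rw [hinner (WithLp.toLp 2 (A *ᵥ f)) (WithLp.toLp 2 (A *ᵥ f))] at h1
    calc ∑ v, ((A *ᵥ f) v) ^ 2 = ∑ v, (A *ᵥ f) v * (A *ᵥ f) v :=
          Finset.sum_congr rfl (fun v _ => pow_two ((A *ᵥ f) v))
    _ = ∑ j, ((inner ℝ (e j) (WithLp.toLp 2 (A *ᵥ f)) : ℝ)) ^ 2 := h1.symm
    _ = ∑ j, (μ j * c j) ^ 2 :=
          Finset.sum_congr rfl (fun j _ => by rw [hcoord f j])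
  have hS2 : ∑ v, ((A *ᵥ f) v) ^ 2 ≤
      (D : ℝ) ^ 2 * (Y.card : ℝ) ^ 2 / N + Λ ^ 2 * ((Y.card : ℝ) - (Y.card : ℝ) ^ 2 / N) := by
    rw [hAf_norm]
    rw [← Finset.add_sum_erase _ _ (Finset.mem_univ j₀)]
    have hterm1 : (μ j₀ * c j₀) ^ 2 = (D : ℝ) ^ 2 * (Y.card : ℝ) ^ 2 / N := by
      rw [hμj₀, mul_pow, hc₀sq]; ring
    have hterm2 : ∑ j ∈ Finset.univ.erase j₀, (μ j * c j) ^ 2 ≤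
        Λ ^ 2 * ((Y.card : ℝ) - (Y.card : ℝ) ^ 2 / N) := by
      have hrest : ∑ j ∈ Finset.univ.erase j₀, c j ^ 2 =
          (Y.card : ℝ) - (Y.card : ℝ) ^ 2 / N := by
        have := Finset.add_sum_erase Finset.univ (fun j => c j ^ 2) (Finset.mem_univ j₀)
        rw [hsum_c] at this
        rw [← hc₀sq]
        linarith
      rw [← hrest, Finset.mul_sum]
      apply Finset.sum_le_sum
      intro j hj
      have hjne : j ≠ j₀ := (Finset.mem_erase.mp hj).1
      rw [mul_pow]
      have := hΛsq j hjne
      nlinarith [sq_nonneg (c j)]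
    linarith
  -- counting bound
  set F := Finset.univ.filter fun v => ∃ y ∈ Y, H.Adj v y with hFdef
  have hsupp : ∀ v, v ∉ F → (A *ᵥ f) v = 0 := by
    intro v hv
    rw [hAdef, SimpleGraph.adjMatrix_mulVec_apply]
    apply Finset.sum_eq_zero
    intro u hu
    simp only [hfdef]
    rw [if_neg]
    intro huY
    apply hv
    rw [hFdef]
    simp only [Finset.mem_filter, Finset.mem_univ, true_and]
    exact ⟨u, huY, (H.mem_neighborFinset v u).mp hu⟩
  have htotal : ∑ v, (A *ᵥ f) v = (D : ℝ) * Y.card := by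
    have h1 : (g) ⬝ᵥ (A *ᵥ f) = ∑ v, (A *ᵥ f) v := by
      show ∑ v, g v * (A *ᵥ f) v = _
      exact Finset.sum_congr rfl fun v _ => one_mul _
    rw [← h1, hsym, hAg, smul_dotProduct]
    have : (g) ⬝ᵥ (f) = (Y.card : ℝ) := by
      show ∑ v, g v * f v = _
      rw [Finset.sum_congr rfl (fun v _ => show g v * f v = if v ∈ Y then 1 else 0 by
        by_cases h : v ∈ Y <;> simp [hfdef, hgdef, h])]
      rw [Finset.sum_ite_mem, Finset.univ_inter, Finset.sum_const, nsmul_eq_mul, mul_one]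
    rw [this]
    rfl
  have hAf_nonneg : ∀ v, 0 ≤ (A *ᵥ f) v := by
    intro v
    rw [hAdef, SimpleGraph.adjMatrix_mulVec_apply]
    apply Finset.sum_nonneg
    intro u _
    simp only [hfdef]
    split <;> norm_num
  have hCS : ((D : ℝ) * Y.card) ^ 2 ≤ (F.card : ℝ) * ∑ v, ((A *ᵥ f) v) ^ 2 := by
    have h1 : ∑ v ∈ F, (A *ᵥ f) v = ∑ v, (A *ᵥ f) v := by
      apply Finset.sum_subset (Finset.subset_univ F)
      intro v _ hv
      exact hsupp v hv
    have h2 := Finset.sum_mul_sq_le_sq_mul_sq F (fun _ => (1 : ℝ)) (fun v => (A *ᵥ f) v)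
    simp only [one_pow, one_mul, Finset.sum_const, nsmul_eq_mul, mul_one] at h2
    rw [h1, htotal] at h2
    calc ((D : ℝ) * Y.card) ^ 2 ≤ (F.card : ℝ) * ∑ v ∈ F, ((A *ᵥ f) v) ^ 2 := h2
    _ ≤ (F.card : ℝ) * ∑ v, ((A *ᵥ f) v) ^ 2 := by
        apply mul_le_mul_of_nonneg_left _ (Nat.cast_nonneg _)
        apply Finset.sum_le_sum_of_subset_of_nonneg (Finset.subset_univ F)
        intro v _ _
        exact sq_nonneg _
  -- final algebra
  set t := (Y.card : ℝ) with htdef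
  set m := (F.card : ℝ) with hmdef
  set Nr := (N : ℝ) with hNrdef
  set Dr := (D : ℝ) with hDrdef
  have ht : 0 < t := by
    rw [htdef]
    exact_mod_cast Finset.card_pos.mpr hY
  have hNr : 0 < Nr := by rw [hNrdef]; exact_mod_cast hN
  have htN : t ≤ Nr := by
    rw [htdef, hNrdef, hNdef]
    exact_mod_cast Finset.card_le_card (Finset.subset_univ Y)
  have hDr : 0 < Dr := by rw [hDrdef]; exact_mod_cast hD
  have hm : 0 ≤ m := Nat.cast_nonneg _
  set denom := Λ ^ 2 + (Dr ^ 2 - Λ ^ 2) * t / Nr with hdenomdef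
  have hdenom_pos : 0 < denom := by
    rw [hdenomdef]
    have h1 : 0 ≤ Λ ^ 2 * (1 - t / Nr) := by
      apply mul_nonneg (sq_nonneg _)
      rw [sub_nonneg, div_le_one hNr]
      exact htN
    have h2 : 0 < Dr ^ 2 * (t / Nr) := by
      apply mul_pos (pow_pos hDr 2)
      exact div_pos ht hNr
    have : Λ ^ 2 + (Dr ^ 2 - Λ ^ 2) * t / Nr = Λ ^ 2 * (1 - t / Nr) + Dr ^ 2 * (t / Nr) := by
      field_simp
      ring
    rw [this]
    linarith
  have hkey : Dr ^ 2 * t ^ 2 ≤ m * (t * denom) := by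
    have hb : Dr ^ 2 * t ^ 2 / Nr + Λ ^ 2 * (t - t ^ 2 / Nr) = t * denom := by
      rw [hdenomdef]
      field_simp
      ring
    calc Dr ^ 2 * t ^ 2 = (Dr * t) ^ 2 := by ring
    _ ≤ m * ∑ v, ((A *ᵥ f) v) ^ 2 := hCS
    _ ≤ m * (Dr ^ 2 * t ^ 2 / Nr + Λ ^ 2 * (t - t ^ 2 / Nr)) := by
        apply mul_le_mul_of_nonneg_left _ hm
        exact hS2
    _ = m * (t * denom) := by rw [hb]
  rw [div_le_div_iff₀ hdenom_pos ht]
  nlinarith [hkey]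

end AuxTanner

/-- Let `G` be a connected `d`-regular graph on `V` vertices and `n ≥ 1`. Then `G^n` is
`D`-regular with `D = d(V^n − 1)/(V − 1)`, and for `Λ = max(λ₂, |λ_min|)` (second largest
and smallest eigenvalues of the adjacency matrix of `G^n`, with multiplicity) and every
nonempty vertex subset `Y`, the expansion satisfies
`|N(Y)|/|Y| ≥ D²/(Λ² + (D² − Λ²)·|Y|/V^n)`, where `N(Y)` is the set of vertices with a
neighbor in `Y`. -/
theorem expansion_orPow_regular {α : Type*} [Fintype α] (G : SimpleGraph α) (d V n : ℕ)
    (hcard : Fintype.card α = V) (hreg : G.IsRegularOfDegree d) (hconn : G.Connected)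
    (hn : 1 ≤ n) :
    (orPow G n).IsRegularOfDegree (d * (V ^ n - 1) / (V - 1)) ∧
    ∀ Y : Finset (Fin n → α), Y.Nonempty →
      ((d : ℝ) * ((V : ℝ) ^ n - 1) / ((V : ℝ) - 1)) ^ 2 /
          ((max (lambdaSecond ((orPow G n).adjMatrix ℝ))
              |lambdaMin ((orPow G n).adjMatrix ℝ)|) ^ 2 +
            (((d : ℝ) * ((V : ℝ) ^ n - 1) / ((V : ℝ) - 1)) ^ 2 -
              (max (lambdaSecond ((orPow G n).adjMatrix ℝ))
                |lambdaMin ((orPow G n).adjMatrix ℝ)|) ^ 2) * (Y.card : ℝ) / (V : ℝ) ^ n)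
        ≤ ((Finset.univ.filter
              fun v : Fin n → α => ∃ y ∈ Y, (orPow G n).Adj v y).card : ℝ) / (Y.card : ℝ) := by
  classical
  have hneα : Nonempty α := hconn.nonempty
  have hV1 : 1 ≤ V := by
    rw [← hcard]
    exact Fintype.card_pos
  have hdeg : ∀ x : Fin n → α, (orPow G n).degree x = d * (V ^ n - 1) / (V - 1) := by
    intro x
    rcases eq_or_lt_of_le hV1 with hV | hV2
    · -- V = 1, hence d = 0
      have hd0 : d = 0 := by
        obtain ⟨v⟩ := hneα
        have h1 := hreg v
        have h2 : G.degree v < Fintype.card α := G.degree_lt_card_verts v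
        rw [hcard, ← hV] at h2
        omega
      rw [orPow_degree G n hcard hreg x, hd0]
      simp
    · rw [orPow_degree G n hcard hreg x, Dnat_eq d V n hV2]
  refine ⟨hdeg, ?_⟩
  intro Y hY
  rcases eq_or_lt_of_le hV1 with hV | hV2
  · -- V = 1, d = 0, trivial
    have hd0 : d = 0 := by
      obtain ⟨v⟩ := hneα
      have h1 := hreg v
      have h2 : G.degree v < Fintype.card α := G.degree_lt_card_verts v
      rw [hcard, ← hV] at h2
      omega
    rw [hd0]
    simp only [Nat.cast_zero, zero_mul, zero_div, ne_eq, OfNat.ofNat_ne_zero,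
      not_false_eq_true, zero_pow]
    positivity
  · -- V ≥ 2 : use the Tanner bound
    have hd1 : 1 ≤ d := by
      by_contra hd
      have hd0 : d = 0 := by omega
      have h2 : 2 ≤ Fintype.card α := by rw [hcard]; omega
      obtain ⟨v, w, hvw⟩ := Fintype.exists_pair_of_one_lt_card (α := α) (by omega)
      obtain ⟨p⟩ := hconn v w
      cases p with
      | nil => exact hvw rfl
      | cons hadj _ =>
        have := G.degree_pos_iff_exists_adj v |>.mpr ⟨_, hadj⟩
        rw [hreg v, hd0] at this
        omega
    have hreg' : (orPow G n).IsRegularOfDegree (d * ∑ k ∈ Finset.range n, V ^ k) :=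
      fun x => orPow_degree G n hcard hreg x
    have hconn' : (orPow G n).Connected := orPow_connected G hconn
    have hD : 0 < d * ∑ k ∈ Finset.range n, V ^ k := by
      have hsum : 0 < ∑ k ∈ Finset.range n, V ^ k := by
        apply Finset.sum_pos (fun k _ => pow_pos (by omega) k)
        exact ⟨0, Finset.mem_range.mpr hn⟩
      positivity
    have hcast : (V : ℝ) ^ n = ((Fintype.card (Fin n → α) : ℕ) : ℝ) := by
      rw [show Fintype.card (Fin n → α) = V ^ n by
        rw [Fintype.card_fun, hcard, Fintype.card_fin]]
      push_cast
      ring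
    rw [Dreal_eq d V n hV2, hcast]
    exact tanner (orPow G n) hreg' hconn' hD Y hY
end

section
/- Let V ≥ 3 and n ≥ 2, and write D_n = 2·(V^n − 1)/(V − 1) for the common degree of the OR power C_V^n. Then the largest eigenvalue of the adjacency matrix of C_V^{n−1} and the second largest eigenvalue λ_2 of the adjacency matrix of C_V^n satisfy λ_1(A(C_V^{n−1})) ≤ λ_2(A(C_V^n)) + ( D_n − λ_2(A(C_V^n)) )·(1/V). -/
open SimpleGraph Finset
open scoped Classical

section Aux

open Polynomial Matrix

private lemma charpoly_conj_aux' {ι : Type*} [Fintype ι] [DecidableEq ι] {R : Type*} [CommRing R]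
    (P D Q : Matrix ι ι R) (h1 : P * Q = 1) : (P * D * Q).charpoly = D.charpoly := by
  have hPQ : (C : R →+* R[X]).mapMatrix P * (C : R →+* R[X]).mapMatrix Q = 1 := by
    rw [← _root_.map_mul, h1, _root_.map_one]
  have hm : charmatrix (P * D * Q) =
      (C : R →+* R[X]).mapMatrix P * charmatrix D * (C : R →+* R[X]).mapMatrix Q := by
    unfold charmatrix
    rw [mul_sub, sub_mul, _root_.map_mul, _root_.map_mul]
    congr 1
    have hc : (C : R →+* R[X]).mapMatrix P * (scalar ι) X
        = (scalar ι) X * (C : R →+* R[X]).mapMatrix P :=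
      (Matrix.scalar_commute (X : R[X]) (fun r => Commute.all _ _) _).symm
    rw [hc, mul_assoc, hPQ, mul_one]
  rw [Matrix.charpoly, Matrix.charpoly, hm, det_mul, det_mul, mul_comm, ← mul_assoc, ← det_mul,
    det_mul, mul_comm ((C : R →+* R[X]).mapMatrix Q).det, ← det_mul, hPQ, det_one, one_mul]

private lemma charpoly_diag' {ι : Type*} [Fintype ι] [DecidableEq ι] {R : Type*} [CommRing R]
    (d : ι → R) : (Matrix.diagonal d).charpoly = ∏ i, (X - C (d i)) := by
  have hcm : charmatrix (Matrix.diagonal d) = Matrix.diagonal (fun i => X - C (d i)) := by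
    unfold charmatrix
    rw [RingHom.mapMatrix_apply, Matrix.diagonal_map (by simp), ← Matrix.diagonal_sub]
    rfl
  rw [Matrix.charpoly, hcm, det_diagonal]

private lemma roots_charpoly' {ι : Type*} [Fintype ι] [DecidableEq ι] {A : Matrix ι ι ℝ}
    (hA : A.IsHermitian) : A.charpoly.roots = Finset.univ.val.map hA.eigenvalues := by
  have hU := (Matrix.mem_unitaryGroup_iff).mp (hA.eigenvectorUnitary).2
  have h1 : A.charpoly = (Matrix.diagonal (RCLike.ofReal ∘ hA.eigenvalues : ι → ℝ)).charpoly := by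
    conv_lhs => rw [hA.spectral_theorem]
    exact charpoly_conj_aux' _ _ _ hU
  have h2 : (RCLike.ofReal ∘ hA.eigenvalues : ι → ℝ) = hA.eigenvalues := by
    funext i; simp
  rw [h1, h2, charpoly_diag']
  have h3 : (∏ i, (X - C (hA.eigenvalues i))) =
      ((Finset.univ.val.map hA.eigenvalues).map fun a => X - C a).prod := by
    rw [Multiset.map_map]
    rfl
  rw [h3, Polynomial.roots_multiset_prod_X_sub_C]

private lemma sum_two' {ι : Type*} [Fintype ι] [DecidableEq ι] {u v : ι} (huv : u ≠ v) (a b : ℝ)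
    (f : ι → ℝ) :
    ∑ w, (if w = u then a else if w = v then b else 0) * f w = a * f u + b * f v := by
  rw [← Finset.sum_subset (Finset.subset_univ {u, v})]
  · rw [Finset.sum_pair huv]
    simp [huv.symm]
  · intro w _ hw
    simp only [Finset.mem_insert, Finset.mem_singleton, not_or] at hw
    simp [hw.1, hw.2]

private lemma exists_two_eigs' {ι : Type*} [Fintype ι] [DecidableEq ι] {A : Matrix ι ι ℝ}
    (hA : A.IsHermitian) {u v : ι} (huv : u ≠ v) {c : ℝ}
    (hq : ∀ a b : ℝ, c * (a ^ 2 + b ^ 2) ≤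
      a ^ 2 * A u u + 2 * (a * b) * A u v + b ^ 2 * A v v) :
    ∃ i j : ι, i ≠ j ∧ c ≤ hA.eigenvalues i ∧ c ≤ hA.eigenvalues j := by
  by_contra hcon
  push_neg at hcon
  have hone : ∀ i j : ι, c ≤ hA.eigenvalues i → c ≤ hA.eigenvalues j → i = j := by
    intro i j hi hj
    by_contra hij
    exact absurd hj (not_le.mpr (hcon i j hij hi))
  have hU1 : (hA.eigenvectorUnitary : Matrix ι ι ℝ)
      * star (hA.eigenvectorUnitary : Matrix ι ι ℝ) = 1 :=
    (Matrix.mem_unitaryGroup_iff).mp (hA.eigenvectorUnitary).2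
  obtain ⟨a, b, hab, hperp⟩ :
      ∃ a b : ℝ, ¬(a = 0 ∧ b = 0) ∧
        ∀ i, c ≤ hA.eigenvalues i →
          a * star (hA.eigenvectorUnitary : Matrix ι ι ℝ) i u
            + b * star (hA.eigenvectorUnitary : Matrix ι ι ℝ) i v = 0 := by
    by_cases hex : ∃ i0, c ≤ hA.eigenvalues i0
    · obtain ⟨i0, hi0⟩ := hex
      by_cases hz : star (hA.eigenvectorUnitary : Matrix ι ι ℝ) i0 u = 0 ∧
          star (hA.eigenvectorUnitary : Matrix ι ι ℝ) i0 v = 0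
      · exact ⟨1, 0, by simp, fun i hi => by
          rw [hone i i0 hi hi0]; simp [hz.1, hz.2]⟩
      · refine ⟨star (hA.eigenvectorUnitary : Matrix ι ι ℝ) i0 v,
          -(star (hA.eigenvectorUnitary : Matrix ι ι ℝ) i0 u), ?_, fun i hi => by
          rw [hone i i0 hi hi0]; ring⟩
        rintro ⟨h1, h2⟩
        exact hz ⟨neg_eq_zero.mp h2, h1⟩
    · push_neg at hex
      exact ⟨1, 0, by simp, fun i hi => absurd hi (not_le.mpr (hex i))⟩
  classical
  let x : ι → ℝ := fun w => if w = u then a else if w = v then b else 0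
  let y : ι → ℝ := star (hA.eigenvectorUnitary : Matrix ι ι ℝ) *ᵥ x
  have hyi : ∀ i, y i = a * star (hA.eigenvectorUnitary : Matrix ι ι ℝ) i u
      + b * star (hA.eigenvectorUnitary : Matrix ι ι ℝ) i v := by
    intro i
    show ∑ k, star (hA.eigenvectorUnitary : Matrix ι ι ℝ) i k * x k = _
    rw [Finset.sum_congr rfl fun k _ =>
      mul_comm (star (hA.eigenvectorUnitary : Matrix ι ι ℝ) i k) (x k)]
    exact sum_two' huv a b _
  have hyzero : ∀ i, c ≤ hA.eigenvalues i → y i = 0 := fun i hi => (hyi i).trans (hperp i hi)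
  have hxy : x ᵥ* (hA.eigenvectorUnitary : Matrix ι ι ℝ) = y := by
    funext i
    show ∑ k, x k * (hA.eigenvectorUnitary : Matrix ι ι ℝ) k i
      = ∑ k, star (hA.eigenvectorUnitary : Matrix ι ι ℝ) i k * x k
    refine Finset.sum_congr rfl fun k _ => ?_
    rw [Matrix.star_apply, star_trivial, mul_comm]
  have hS2 : x ⬝ᵥ x = ∑ i, (y i) ^ 2 := by
    have h1 : (x ᵥ* (hA.eigenvectorUnitary : Matrix ι ι ℝ)) ⬝ᵥ y = x ⬝ᵥ x := by
      show (x ᵥ* _) ⬝ᵥ (star (hA.eigenvectorUnitary : Matrix ι ι ℝ) *ᵥ x) = _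
      rw [Matrix.dotProduct_mulVec, Matrix.vecMul_vecMul, hU1, Matrix.vecMul_one]
    rw [← h1, hxy, dotProduct]
    exact Finset.sum_congr rfl fun i _ => (sq (y i)).symm
  have hS1 : x ⬝ᵥ (A *ᵥ x) = ∑ i, hA.eigenvalues i * (y i) ^ 2 := by
    conv_lhs => rw [hA.spectral_theorem, Unitary.conjStarAlgAut_apply]
    rw [← Matrix.mulVec_mulVec, ← Matrix.mulVec_mulVec, Matrix.dotProduct_mulVec, hxy]
    show y ⬝ᵥ (Matrix.diagonal (RCLike.ofReal ∘ hA.eigenvalues) *ᵥ y) = _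
    rw [dotProduct]
    refine Finset.sum_congr rfl fun i _ => ?_
    rw [Matrix.mulVec_diagonal]
    simp only [Function.comp_apply, RCLike.ofReal_real_eq_id, id_eq]
    ring
  have hxAx : x ⬝ᵥ (A *ᵥ x) = a ^ 2 * A u u + 2 * (a * b) * A u v + b ^ 2 * A v v := by
    have hsym : A v u = A u v := by
      have h := congrFun (congrFun hA v) u
      simpa using h.symm
    have hAu : (A *ᵥ x) u = a * A u u + b * A u v := by
      show ∑ k, A u k * x k = _
      rw [Finset.sum_congr rfl fun k _ => mul_comm (A u k) (x k)]
      exact sum_two' huv a b _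
    have hAv : (A *ᵥ x) v = a * A v u + b * A v v := by
      show ∑ k, A v k * x k = _
      rw [Finset.sum_congr rfl fun k _ => mul_comm (A v k) (x k)]
      exact sum_two' huv a b _
    show ∑ w, x w * (A *ᵥ x) w = _
    rw [sum_two' huv a b (A *ᵥ x), hAu, hAv, hsym]
    ring
  have hxx : x ⬝ᵥ x = a ^ 2 + b ^ 2 := by
    show ∑ w, x w * x w = _
    rw [sum_two' huv a b x]
    have h1 : x u = a := if_pos rfl
    have h2 : x v = b := by simp [x, huv.symm]
    rw [h1, h2]
    ring
  have hxxpos : 0 < x ⬝ᵥ x := by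
    rw [hxx]
    rcases not_and_or.mp hab with h | h
    · nlinarith [sq_nonneg b, sq_pos_of_ne_zero h]
    · nlinarith [sq_nonneg a, sq_pos_of_ne_zero h]
  have hyne : ∃ i, y i ≠ 0 := by
    by_contra hy
    push_neg at hy
    have hzero : x ⬝ᵥ x = 0 := by
      rw [hS2]
      exact Finset.sum_eq_zero fun i _ => by rw [hy i]; ring
    linarith
  obtain ⟨i1, hi1⟩ := hyne
  have hlt : ∑ i, hA.eigenvalues i * (y i) ^ 2 < c * ∑ i, (y i) ^ 2 := by
    rw [Finset.mul_sum]
    refine Finset.sum_lt_sum (fun i _ => ?_) ⟨i1, Finset.mem_univ i1, ?_⟩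
    · by_cases hyi0 : y i = 0
      · rw [hyi0]; ring_nf; exact le_refl _
      · have hic : hA.eigenvalues i < c := by
          by_contra h
          push_neg at h
          exact hyi0 (hyzero i h)
        nlinarith [sq_pos_of_ne_zero hyi0]
    · have hic : hA.eigenvalues i1 < c := by
        by_contra h
        push_neg at h
        exact hi1 (hyzero i1 h)
      nlinarith [sq_pos_of_ne_zero hi1]
  have hge : c * (x ⬝ᵥ x) ≤ x ⬝ᵥ (A *ᵥ x) := by
    rw [hxAx, hxx]
    exact hq a b
  rw [hS1, hS2] at hge
  linarith

private lemma length_sortedEigs' {ι : Type*} [Fintype ι] [DecidableEq ι] {A : Matrix ι ι ℝ}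
    (hA : A.IsHermitian) : (sortedEigs A).length = Fintype.card ι := by
  rw [sortedEigs, Multiset.length_sort, roots_charpoly' hA, Multiset.card_map]
  rfl

private lemma lambdaMax_le' {ι : Type*} [Fintype ι] [DecidableEq ι] {A : Matrix ι ι ℝ}
    (hA : A.IsHermitian) [Nonempty ι] {d : ℝ} (h : ∀ i, hA.eigenvalues i ≤ d) :
    lambdaMax A ≤ d := by
  have hlen := length_sortedEigs' hA
  have hcard : 1 ≤ Fintype.card ι := Fintype.card_pos
  have hidx : Fintype.card ι - 1 < (sortedEigs A).length := by omega
  have hmem : (sortedEigs A).getD (Fintype.card ι - 1) 0 ∈ sortedEigs A := by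
    rw [List.getD_eq_getElem _ _ hidx]
    exact List.getElem_mem _
  rw [lambdaMax]
  have hmem2 : (sortedEigs A).getD (Fintype.card ι - 1) 0 ∈ A.charpoly.roots := by
    rw [← Multiset.mem_sort (· ≤ ·)]
    exact hmem
  rw [roots_charpoly' hA] at hmem2
  obtain ⟨i, _, hi⟩ := Multiset.mem_map.mp hmem2
  rw [← hi]
  exact h i

private lemma lambdaSecond_ge' {ι : Type*} [Fintype ι] [DecidableEq ι] {A : Matrix ι ι ℝ}
    (hA : A.IsHermitian) {c : ℝ} (hcard : 2 ≤ Fintype.card ι)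
    (h2 : ∃ i j : ι, i ≠ j ∧ c ≤ hA.eigenvalues i ∧ c ≤ hA.eigenvalues j) :
    c ≤ lambdaSecond A := by
  obtain ⟨i, j, hij, hi, hj⟩ := h2
  set l := sortedEigs A with hl
  have hlen : l.length = Fintype.card ι := length_sortedEigs' hA
  set N := Fintype.card ι with hN
  have hidx : N - 2 < l.length := by omega
  rw [lambdaSecond, ← hl, ← hN, List.getD_eq_getElem _ _ hidx]
  by_contra hcon
  push_neg at hcon
  have hcount : 2 ≤ l.countP (fun a => decide (c ≤ a)) := by
    have h1 : l.countP (fun a => decide (c ≤ a))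
        = Multiset.countP (fun a => c ≤ a) (l : Multiset ℝ) := by
      rw [Multiset.coe_countP]
    rw [h1, hl, sortedEigs, Multiset.sort_eq, roots_charpoly' hA, Multiset.countP_map]
    obtain ⟨t, ht⟩ := Multiset.exists_cons_of_mem (Finset.mem_val.mpr (Finset.mem_univ i))
    have hjt : j ∈ t := by
      have hju : j ∈ Finset.univ.val := Finset.mem_val.mpr (Finset.mem_univ j)
      rw [ht] at hju
      rcases Multiset.mem_cons.mp hju with h | h
      · exact absurd h.symm hij
      · exact h
    obtain ⟨t', rfl⟩ := Multiset.exists_cons_of_mem hjt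
    rw [ht, Multiset.filter_cons_of_pos (p := fun a => c ≤ hA.eigenvalues a) (a := i) _ hi,
      Multiset.filter_cons_of_pos (p := fun a => c ≤ hA.eigenvalues a) (a := j) _ hj,
      Multiset.card_cons, Multiset.card_cons]
    omega
  have hsorted : l.Pairwise (· ≤ ·) := by rw [hl, sortedEigs]; exact Multiset.pairwise_sort _ _
  have hsplit : l = l.take (N - 1) ++ l.drop (N - 1) := (List.take_append_drop _ _).symm
  have hcount2 : l.countP (fun a => decide (c ≤ a)) ≤ 1 := by
    conv_lhs => rw [hsplit]
    rw [List.countP_append]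
    have htake : (l.take (N - 1)).countP (fun a => decide (c ≤ a)) = 0 := by
      rw [List.countP_eq_zero]
      intro x hx
      simp only [decide_eq_true_eq]
      push_neg
      obtain ⟨k, hk, hkx⟩ := List.mem_take_iff_getElem.mp hx
      have hkN : k ≤ N - 2 := by omega
      have hrel : l[k] ≤ l[N - 2] := by
        rcases eq_or_lt_of_le hkN with rfl | hlt2
        · exact le_refl _
        · exact List.Pairwise.rel_get_of_lt hsorted (by simpa using hlt2)
      rw [← hkx]
      exact lt_of_le_of_lt hrel hcon
    have hdrop : (l.drop (N - 1)).countP (fun a => decide (c ≤ a)) ≤ 1 := by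
      calc (l.drop (N - 1)).countP _ ≤ (l.drop (N - 1)).length := List.countP_le_length
        _ = l.length - (N - 1) := List.length_drop
        _ ≤ 1 := by omega
    omega
  omega

private lemma adjMatrix_isHermitian' {α : Type*} [Fintype α] [DecidableEq α] (G : SimpleGraph α)
    [DecidableRel G.Adj] : (G.adjMatrix ℝ).IsHermitian := by
  unfold Matrix.IsHermitian
  ext i j
  simp [Matrix.conjTranspose_apply, SimpleGraph.adjMatrix_apply, SimpleGraph.adj_comm]

private lemma eig_le_degree_bound' {ι : Type*} [Fintype ι] [DecidableEq ι] [Nonempty ι]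
    (G : SimpleGraph ι) [DecidableRel G.Adj] {d : ℝ}
    (h : ∀ k : ι, ((G.degree k : ℕ) : ℝ) ≤ d) (i : ι) :
    (adjMatrix_isHermitian' G).eigenvalues i ≤ d := by
  set A := G.adjMatrix ℝ with hA
  set μ := (adjMatrix_isHermitian' G).eigenvalues i with hμ
  have hsp : μ ∈ spectrum ℝ A := (adjMatrix_isHermitian' G).eigenvalues_mem_spectrum_real i
  have hsp2 : μ ∈ spectrum ℝ (Matrix.toLin' A) := by
    rwa [show Matrix.toLin' A = Matrix.toLinAlgEquiv' A from rfl, AlgEquiv.spectrum_eq]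
  have heig : Module.End.HasEigenvalue (Matrix.toLin' A) μ :=
    Module.End.hasEigenvalue_iff_mem_spectrum.mpr hsp2
  obtain ⟨k, hk⟩ := eigenvalue_mem_ball heig
  rw [Metric.mem_closedBall, Real.dist_eq] at hk
  have hdiag : A k k = 0 := by simp [hA]
  have hsum : ∑ j ∈ Finset.univ.erase k, ‖A k j‖ ≤ d := by
    have h1 : ∑ j ∈ Finset.univ.erase k, ‖A k j‖ ≤ ∑ j : ι, ‖A k j‖ :=
      Finset.sum_le_sum_of_subset_of_nonneg (Finset.erase_subset _ _)
        (fun j _ _ => norm_nonneg _)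
    have h2 : ∑ j : ι, ‖A k j‖ = ((G.degree k : ℕ) : ℝ) := by
      rw [SimpleGraph.degree, SimpleGraph.neighborFinset_eq_filter]
      rw [Finset.sum_congr rfl fun j _ => show ‖A k j‖ = if G.Adj k j then (1 : ℝ) else 0 by
        simp [hA, SimpleGraph.adjMatrix_apply]
        split <;> simp]
      rw [Finset.sum_boole]
    linarith [h (k := k)]
  rw [hdiag, sub_zero] at hk
  have habs := abs_le.mp hk
  linarith

private lemma degree_orPow_le' (V m : ℕ) (hV : 3 ≤ V) (x : Fin m → Fin V) :
    (orPow (cycleGraph V) m).degree x ≤ ∑ j : Fin m, 2 * V ^ (m - 1 - (j : ℕ)) := by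
  classical
  rw [SimpleGraph.degree, SimpleGraph.neighborFinset_eq_filter]
  set S : Fin m → Finset (Fin m → Fin V) := fun j =>
    Finset.univ.filter (fun y => (cycleGraph V).Adj (x j) (y j) ∧ ∀ i : Fin m, i < j → x i = y i)
    with hS
  have hsub : Finset.univ.filter ((orPow (cycleGraph V) m).Adj x)
      ⊆ Finset.univ.biUnion S := by
    intro y hy
    obtain ⟨j, hadj, hagree⟩ := (Finset.mem_filter.mp hy).2
    exact Finset.mem_biUnion.mpr ⟨j, Finset.mem_univ j,
      Finset.mem_filter.mpr ⟨Finset.mem_univ y, hadj, hagree⟩⟩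
  refine le_trans (Finset.card_le_card hsub) (le_trans (Finset.card_biUnion_le) ?_)
  refine Finset.sum_le_sum fun j _ => ?_
  obtain ⟨k, rfl⟩ : ∃ k, V = k + 3 := ⟨V - 3, by omega⟩
  set T := ((cycleGraph (k + 3)).neighborFinset (x j)) ×ˢ
    (Finset.univ : Finset (Fin (m - 1 - (j : ℕ)) → Fin (k + 3))) with hT
  have hinj : ∀ y ∈ S j, ∀ z ∈ S j,
      (fun y : Fin m → Fin (k + 3) =>
        ((y j : Fin (k + 3)), fun t : Fin (m - 1 - (j : ℕ)) =>
          y ⟨(j : ℕ) + 1 + (t : ℕ), by omega⟩)) y =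
      (fun y : Fin m → Fin (k + 3) =>
        ((y j : Fin (k + 3)), fun t : Fin (m - 1 - (j : ℕ)) =>
          y ⟨(j : ℕ) + 1 + (t : ℕ), by omega⟩)) z → y = z := by
    intro y hy z hz heq
    simp only [Prod.mk.injEq] at heq
    obtain ⟨hy1, hy2⟩ := (Finset.mem_filter.mp hy).2
    obtain ⟨hz1, hz2⟩ := (Finset.mem_filter.mp hz).2
    funext i
    rcases lt_trichotomy i j with hij | hij | hij
    · rw [← hy2 i hij, ← hz2 i hij]
    · subst hij; exact heq.1
    · have hibound : (i : ℕ) - (j : ℕ) - 1 < m - 1 - (j : ℕ) := by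
        have := i.isLt
        have hji : (j : ℕ) < (i : ℕ) := hij
        omega
      have hcf := congrFun heq.2 ⟨(i : ℕ) - (j : ℕ) - 1, hibound⟩
      simpa [show (j : ℕ) + 1 + ((i : ℕ) - (j : ℕ) - 1) = (i : ℕ) by
        have hji : (j : ℕ) < (i : ℕ) := hij
        omega, Fin.eta] using hcf
  have hmaps : ∀ y ∈ S j,
      (fun y : Fin m → Fin (k + 3) =>
        ((y j : Fin (k + 3)), fun t : Fin (m - 1 - (j : ℕ)) =>
          y ⟨(j : ℕ) + 1 + (t : ℕ), by omega⟩)) y ∈ T := by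
    intro y hy
    obtain ⟨hy1, _⟩ := (Finset.mem_filter.mp hy).2
    exact Finset.mem_product.mpr ⟨(SimpleGraph.mem_neighborFinset _ _ _).mpr hy1,
      Finset.mem_univ _⟩
  have hcard := Finset.card_le_card_of_injOn _ hmaps hinj
  refine le_trans hcard ?_
  rw [hT, Finset.card_product]
  have hdeg : ((cycleGraph (k + 3)).neighborFinset (x j)).card = 2 := by
    have hd := cycleGraph_degree_three_le (n := k) (v := x j)
    rwa [SimpleGraph.degree] at hd
  rw [hdeg]
  have hcu : (Finset.univ : Finset (Fin (m - 1 - (j : ℕ)) → Fin (k + 3))).card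
      = (k + 3) ^ (m - 1 - (j : ℕ)) := by
    rw [Finset.card_univ, Fintype.card_fun, Fintype.card_fin, Fintype.card_fin]
  rw [hcu]

end Aux

/-- For `V ≥ 3` and `n ≥ 2`, with `D_n = 2(V^n − 1)/(V − 1)` the common degree of `C_V^n`,
the largest eigenvalue of the adjacency matrix of `C_V^{n−1}` and the second largest
eigenvalue (with multiplicity) of the adjacency matrix of `C_V^n` satisfy
`λ₁(A(C^{n−1})) ≤ λ₂(A(C^n)) + (D_n − λ₂(A(C^n)))·(1/V)`. -/


theorem lambda1_le_lambda2_orPow_cycle (V n : ℕ) (hV : 3 ≤ V) (hn : 2 ≤ n) :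
    lambdaMax ((orPow (cycleGraph V) (n - 1)).adjMatrix ℝ)
      ≤ lambdaSecond ((orPow (cycleGraph V) n).adjMatrix ℝ) +
        (2 * ((V : ℝ) ^ n - 1) / ((V : ℝ) - 1) -
          lambdaSecond ((orPow (cycleGraph V) n).adjMatrix ℝ)) * (1 / (V : ℝ)) := by
  classical
  have hVR : (3 : ℝ) ≤ (V : ℝ) := by exact_mod_cast hV
  have hV0 : 0 < V := by omega
  haveI : Nonempty (Fin V) := ⟨⟨0, hV0⟩⟩
  haveI : Nonempty (Fin (n - 1) → Fin V) := ⟨fun _ => ⟨0, hV0⟩⟩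
  set m := n - 1 with hm
  have hm1 : 1 ≤ m := by omega
  -- Step 1: lambdaMax bound
  set d1 : ℝ := 2 * ((V : ℝ) ^ m - 1) / ((V : ℝ) - 1) with hd1
  have hdegle : ∀ k : Fin m → Fin V,
      (((orPow (cycleGraph V) m).degree k : ℕ) : ℝ) ≤ d1 := by
    intro k
    have h1 := degree_orPow_le' V m hV k
    have h3 : (∑ j : Fin m, 2 * (V : ℝ) ^ (m - 1 - (j : ℕ))) = d1 := by
      rw [Fin.sum_univ_eq_sum_range (fun j => 2 * (V : ℝ) ^ (m - 1 - j)) m,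
        Finset.sum_range_reflect (fun t => 2 * (V : ℝ) ^ t) m, ← Finset.mul_sum,
        geom_sum_eq (by linarith : (V : ℝ) ≠ 1), hd1]
      ring
    calc (((orPow (cycleGraph V) m).degree k : ℕ) : ℝ)
        ≤ (∑ j : Fin m, 2 * (V : ℝ) ^ (m - 1 - (j : ℕ))) := by exact_mod_cast h1
      _ = d1 := h3
  have hmax : lambdaMax ((orPow (cycleGraph V) m).adjMatrix ℝ) ≤ d1 :=
    lambdaMax_le' (adjMatrix_isHermitian' _) fun i =>
      eig_le_degree_bound' (orPow (cycleGraph V) m) hdegle i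
  -- Step 2: lambdaSecond lower bound
  set A2 := (orPow (cycleGraph V) n).adjMatrix ℝ with hA2
  have hherm2 : A2.IsHermitian := adjMatrix_isHermitian' _
  have hcard2 : 2 ≤ Fintype.card (Fin n → Fin V) := by
    rw [Fintype.card_fun, Fintype.card_fin, Fintype.card_fin]
    calc 2 ≤ 3 ^ 2 := by norm_num
      _ ≤ 3 ^ n := Nat.pow_le_pow_right (by norm_num) hn
      _ ≤ V ^ n := Nat.pow_le_pow_left hV n
  set lam2 := lambdaSecond A2 with hlam2
  have hbound : -2 / ((V : ℝ) - 1) ≤ lam2 := by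
    have hn0 : 0 < n := by omega
    rcases Nat.lt_or_ge V 4 with hV4 | hV4
    · -- V = 3 : use any two distinct vertices, c = -1
      have hVeq : V = 3 := by omega
      have hmm : (-1 : ℝ) ≤ lam2 := by
        refine lambdaSecond_ge' hherm2 hcard2 ?_
        have huv : (fun _ : Fin n => (⟨0, hV0⟩ : Fin V)) ≠ (fun _ : Fin n => ⟨1, by omega⟩) := by
          intro h
          have := congrFun h ⟨0, hn0⟩
          simp only [Fin.mk.injEq] at this
          omega
        refine exists_two_eigs' hherm2 huv ?_
        intro a b
        have h00 : A2 (fun _ => ⟨0, hV0⟩) (fun _ => ⟨0, hV0⟩) = 0 := by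
          simp [hA2]
        have h11 : A2 (fun _ => ⟨1, by omega⟩) (fun _ => (⟨1, by omega⟩ : Fin V)) = 0 := by
          simp [hA2]
        rw [h00, h11]
        have : A2 (fun _ => ⟨0, hV0⟩) (fun _ => ⟨1, by omega⟩) = 0 ∨
            A2 (fun _ => ⟨0, hV0⟩) (fun _ => ⟨1, by omega⟩) = 1 := by
          rw [hA2]
          by_cases hadj : (orPow (cycleGraph V) n).Adj (fun _ => ⟨0, hV0⟩) (fun _ => ⟨1, by omega⟩)
          · right; simp [hadj]
          · left; simp [hadj]
        rcases this with h | h <;> rw [h] <;> nlinarith [sq_nonneg (a + b), sq_nonneg (a - b)]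
      have : -2 / ((V : ℝ) - 1) = -1 := by
        subst hVeq
        norm_num
      linarith
    · -- V ≥ 4 : use two nonadjacent vertices, c = 0
      have hmm : (0 : ℝ) ≤ lam2 := by
        refine lambdaSecond_ge' hherm2 hcard2 ?_
        set u : Fin n → Fin V := fun _ => ⟨0, hV0⟩ with hu
        set v : Fin n → Fin V := fun i => if (i : ℕ) = 0 then ⟨2, by omega⟩ else ⟨0, hV0⟩ with hv
        have huv : u ≠ v := by
          intro h
          have := congrFun h ⟨0, hn0⟩
          simp only [hu, hv] at this
          norm_num [Fin.mk.injEq] at this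
        have hnadj : ¬ (orPow (cycleGraph V) n).Adj u v := by
          rintro ⟨j, hadj, -⟩
          by_cases hj : (j : ℕ) = 0
          · have hvj : v j = ⟨2, by omega⟩ := by simp [hv, hj]
            have huj : u j = ⟨0, hV0⟩ := rfl
            rw [huj, hvj, cycleGraph_adj'] at hadj
            rcases hadj with h | h
            · rw [Fin.sub_def] at h
              simp only [Fin.val_mk] at h
              rw [Nat.mod_eq_of_lt (by omega)] at h
              omega
            · rw [Fin.sub_def] at h
              simp only [Fin.val_mk] at h
              rw [Nat.sub_zero, Nat.add_mod_left, Nat.mod_eq_of_lt (by omega)] at h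
              omega
          · have hvj : v j = ⟨0, hV0⟩ := by simp [hv, hj]
            have huj : u j = ⟨0, hV0⟩ := rfl
            rw [huj, hvj] at hadj
            exact (cycleGraph V).loopless.irrefl _ hadj
        refine exists_two_eigs' hherm2 huv ?_
        intro a b
        have h00 : A2 u u = 0 := by simp [hA2]
        have h11 : A2 v v = 0 := by simp [hA2]
        have h01 : A2 u v = 0 := by simp [hA2, hnadj]
        rw [h00, h11, h01]
        ring_nf
        nlinarith [sq_nonneg a, sq_nonneg b]
      have hneg : -2 / ((V : ℝ) - 1) ≤ 0 := by
        apply div_nonpos_of_nonpos_of_nonneg <;> linarith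
      linarith
  -- Step 3: arithmetic
  refine le_trans hmax ?_
  have hpow : (V : ℝ) ^ n = (V : ℝ) * (V : ℝ) ^ m := by
    conv_lhs => rw [show n = m + 1 by omega]
    rw [pow_succ]
    ring
  set P := (V : ℝ) ^ m with hP
  rw [hd1]
  rw [show (V : ℝ) ^ n = (V : ℝ) * P by rw [hpow]]
  have hW1 : (0 : ℝ) < (V : ℝ) - 1 := by linarith
  have hW0 : (0 : ℝ) < (V : ℝ) := by linarith
  rw [← sub_nonneg]
  have expand : lam2 + (2 * ((V : ℝ) * P - 1) / ((V : ℝ) - 1) - lam2) * (1 / (V : ℝ))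
      - 2 * (P - 1) / ((V : ℝ) - 1)
      = (lam2 * ((V : ℝ) - 1) ^ 2 + 2 * ((V : ℝ) - 1)) / (((V : ℝ) - 1) * (V : ℝ)) := by
    field_simp
    ring
  rw [expand]
  apply div_nonneg _ (by positivity)
  have h2 : -2 ≤ lam2 * ((V : ℝ) - 1) := by
    rw [div_le_iff₀ hW1] at hbound
    linarith
  nlinarith [hW1.le]
end
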